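/- Under minimality, the prediction coefficients are uniformly bounded over all orders and positions: for all n ≥ 1 and 1 ≤ h ≤ n, |φ_{n,h}| ≤ √(γ(0)/σ̃²), where σ̃² := ‖X_0 − P_{(−∞,−1]∪[1,∞)} X_0‖² > 0. -/

import Mathlib

open scoped RealInnerProductSpace
open Filter

/-- The closed linear span `H_I` of `{X t : t ∈ I}` in a real Hilbert space. -/
noncomputable def hSpan {H : Type*} [NormedAddCommGroup H] [InnerProductSpace ℝ H]
    (X : ℤ → H) (I : Set ℤ) : Submodule ℝ H :=
  (Submodule.span ℝ (X '' I)).topologicalClosure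

/-- The orthogonal projection `P_I v` of `v` onto the closed span `H_I`. -/
noncomputable def projSpan {H : Type*} [NormedAddCommGroup H] [InnerProductSpace ℝ H]
    [CompleteSpace H] (X : ℤ → H) (I : Set ℤ) (v : H) : H :=
  haveI : CompleteSpace (hSpan X I) :=
    (Submodule.isClosed_topologicalClosure _).completeSpace_coe
  ((hSpan X I).orthogonalProjection v : H)

/-- The innovation `ε_t = X_t - ∑_{i ≥ 1} π_i X_{t-i}` of the AR(∞) representation. -/
noncomputable def arEps {H : Type*} [NormedAddCommGroup H] [InnerProductSpace ℝ H]
    (X : ℤ → H) (π : ℕ → ℝ) (t : ℤ) : H :=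
  X t - ∑' i : ℕ, π (i + 1) • X (t - (i + 1 : ℕ))

/-- Under minimality, the prediction coefficients are uniformly bounded over all orders and
positions: for all `n ≥ 1` and `1 ≤ h ≤ n`, `|φ_{n,h}| ≤ √(γ(0)/σ̃²)`, where
`σ̃² := ‖X_0 − P_{(−∞,−1]∪[1,∞)} X_0‖² > 0`. -/
theorem prediction_coeff_uniformly_bounded_of_minimal
    {H : Type*} [NormedAddCommGroup H] [InnerProductSpace ℝ H] [CompleteSpace H]
    (X : ℤ → H) (γ : ℤ → ℝ) (π : ℕ → ℝ) (σε2 : ℝ)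
    (hstat : ∀ s t : ℤ, ⟪X s, X t⟫ = γ (t - s))
    (hπ : Summable fun i : ℕ => |π i|)
    (heps_orth : ∀ t s : ℤ, s ≤ t - 1 → ⟪arEps X π t, X s⟫ = 0)
    (heps_var : ∀ t : ℤ, ‖arEps X π t‖ ^ 2 = σε2)
    (hσε : 0 < σε2)
    (hmin : 0 < ‖X 0 - projSpan X (Set.Iic (-1) ∪ Set.Ici 1) (X 0)‖ ^ 2)
    (φ : ℕ → ℕ → ℝ)
    (hφ : ∀ k : ℕ, 1 ≤ k → ∀ t : ℤ,
      projSpan X (Set.Icc (t - k) (t - 1)) (X t) = ∑ j ∈ Finset.Icc 1 k, φ k j • X (t - j)) :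
    ∀ n h : ℕ, 1 ≤ h → h ≤ n →
      |φ n h| ≤ Real.sqrt (γ 0 / ‖X 0 - projSpan X (Set.Iic (-1) ∪ Set.Ici 1) (X 0)‖ ^ 2) := by
  intro n h h1 hn
  classical
  set J : Set ℤ := Set.Iic (-1) ∪ Set.Ici 1 with hJ
  haveI : CompleteSpace (hSpan X J) :=
    (Submodule.isClosed_topologicalClosure _).completeSpace_coe
  set w : H := X 0 - projSpan X J (X 0) with hwdef
  have hwK : w ∈ (hSpan X J)ᗮ := by
    simpa [projSpan, hwdef] using
      Submodule.sub_starProjection_mem_orthogonal (K := hSpan X J) (X 0)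
  have hXmem : ∀ s : ℤ, s ∈ J → X s ∈ hSpan X J := fun s hs =>
    Submodule.le_topologicalClosure _ (Submodule.subset_span ⟨s, hs, rfl⟩)
  have hw0 : ∀ s : ℤ, s ≠ 0 → ⟪w, X s⟫ = 0 := by
    intro s hs
    have hsJ : s ∈ J := by
      simp only [hJ, Set.mem_union, Set.mem_Iic, Set.mem_Ici]
      omega
    exact (Submodule.mem_orthogonal' _ _).1 hwK _ (hXmem s hsJ)
  have hpmem : projSpan X J (X 0) ∈ hSpan X J := by
    simpa [projSpan] using ((hSpan X J).orthogonalProjection (X 0)).2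
  have hwX0 : ⟪w, X 0⟫ = ‖w‖ ^ 2 := by
    have h0 : ⟪w, projSpan X J (X 0)⟫ = 0 :=
      (Submodule.mem_orthogonal' _ _).1 hwK _ hpmem
    have hsplit : ⟪w, X 0⟫ = ⟪w, w⟫ + ⟪w, projSpan X J (X 0)⟫ := by
      rw [← inner_add_right]
      congr 1
      simp [hwdef]
    rw [hsplit, h0, real_inner_self_eq_norm_sq]
    ring
  have hwpos : 0 < ‖w‖ := by
    nlinarith [hmin, norm_nonneg w]
  set t : ℤ := (h : ℤ) with htdef
  set P : H := projSpan X (Set.Icc (t - n) (t - 1)) (X t) with hPdef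
  have hproj : P = ∑ j ∈ Finset.Icc 1 n, φ n j • X (t - j) := hφ n (le_trans h1 hn) t
  have hkey : ⟪w, P⟫ = φ n h * ‖w‖ ^ 2 := by
    rw [hproj, inner_sum, Finset.sum_eq_single h]
    · rw [inner_smul_right]
      have ht0 : t - (h : ℤ) = 0 := by omega
      rw [ht0, hwX0]
    · intro j hj hne
      have hne' : t - (j : ℤ) ≠ 0 := by omega
      rw [inner_smul_right, hw0 _ hne', mul_zero]
    · intro hh
      exact absurd (Finset.mem_Icc.2 ⟨h1, hn⟩) hh
  have hCS : |⟪w, P⟫| ≤ ‖w‖ * ‖P‖ := abs_real_inner_le_norm _ _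
  have hPle : ‖P‖ ≤ ‖X t‖ := by
    haveI : CompleteSpace (hSpan X (Set.Icc (t - n) (t - 1))) :=
      (Submodule.isClosed_topologicalClosure _).completeSpace_coe
    have := Submodule.orthogonalProjectionOnto_norm_le (K := hSpan X (Set.Icc (t - n) (t - 1)))
    calc ‖P‖ = ‖(hSpan X (Set.Icc (t - n) (t - 1))).orthogonalProjection (X t)‖ := by
          simp [hPdef, projSpan]
      _ ≤ ‖(hSpan X (Set.Icc (t - n) (t - 1))).orthogonalProjection‖ * ‖X t‖ :=
          ((hSpan X (Set.Icc (t - n) (t - 1))).orthogonalProjection).le_opNorm (X t)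
      _ ≤ 1 * ‖X t‖ := by gcongr
      _ = ‖X t‖ := one_mul _
  have hXt : ‖X t‖ = Real.sqrt (γ 0) := by
    have : ‖X t‖ ^ 2 = γ 0 := by
      rw [← real_inner_self_eq_norm_sq, hstat]
      norm_num
    rw [← this, Real.sqrt_sq (norm_nonneg _)]
  have hγ0 : 0 ≤ γ 0 := by
    have : ‖X t‖ ^ 2 = γ 0 := by
      rw [← real_inner_self_eq_norm_sq, hstat]; norm_num
    nlinarith [norm_nonneg (X t)]
  have hineq : |φ n h| * ‖w‖ ^ 2 ≤ ‖w‖ * ‖X t‖ := by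
    have : |φ n h * ‖w‖ ^ 2| ≤ ‖w‖ * ‖X t‖ := by
      rw [← hkey]; exact le_trans hCS (by gcongr)
    calc |φ n h| * ‖w‖ ^ 2 = |φ n h * ‖w‖ ^ 2| := by
          rw [abs_mul, abs_of_nonneg (sq_nonneg ‖w‖)]
      _ ≤ ‖w‖ * ‖X t‖ := this
  have hgoal : |φ n h| ≤ ‖X t‖ / ‖w‖ := by
    rw [le_div_iff₀ hwpos]
    nlinarith [hineq, hwpos]
  calc |φ n h| ≤ ‖X t‖ / ‖w‖ := hgoal
    _ = Real.sqrt (γ 0 / ‖w‖ ^ 2) := by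
        rw [Real.sqrt_div hγ0, Real.sqrt_sq (norm_nonneg _), hXt]
    _ = Real.sqrt (γ 0 / ‖X 0 - projSpan X (Set.Iic (-1) ∪ Set.Ici 1) (X 0)‖ ^ 2) := by
        rw [hwdef, hJ]
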